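/- There are infinitely many triples (x, y, z) of natural numbers such that x + y = z, every base-4 digit of x lies in {0, 1, 2}, every base-5 digit of y lies in {0, 1, 2}, and every base-6 digit of z lies in {0, 1, 2}. -/

import Mathlib

/-- `n` has all base-`b` digits at most 2, expressed via quotients. -/
def GoodD (b n : ℕ) : Prop := ∀ i, n / b ^ i % b ≤ 2

lemma goodD_zero (b : ℕ) : GoodD b 0 := by intro i; simp

lemma goodD_div {b n : ℕ} (h : GoodD b n) : GoodD b (n / b) := by
  intro i
  have h1 := h (i + 1)
  rw [Nat.div_div_eq_div_mul, show b * b ^ i = b ^ (i + 1) by rw [pow_succ, mul_comm]]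
  exact h1

lemma goodD_digits {b : ℕ} (hb : 2 ≤ b) : ∀ n, GoodD b n → ∀ d ∈ Nat.digits b n, d ≤ 2 := by
  intro n
  induction n using Nat.strong_induction_on with
  | _ n ih =>
    intro hg d hd
    rcases Nat.eq_zero_or_pos n with rfl | hn
    · simp at hd
    · rw [Nat.digits_def' (by omega : 1 < b) hn] at hd
      rcases List.mem_cons.mp hd with rfl | hd'
      · have h0 := hg 0
        simpa using h0
      · exact ih (n / b) (Nat.div_lt_self hn (by omega)) (goodD_div hg) d hd'

lemma goodD_add_high {b : ℕ} (hb : 3 ≤ b) {x a d : ℕ} (hx : x < b ^ a)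
    (hg : GoodD b x) (hd : d ≤ 2) : GoodD b (x + d * b ^ a) := by
  intro i
  rcases Nat.lt_trichotomy i a with hia | heq | hia
  · have h2 : x + d * b ^ a = x + b ^ i * (d * b ^ (a - i)) := by
      rw [show b ^ a = b ^ i * b ^ (a - i) by rw [← pow_add]; congr 1; omega]; ring
    rw [h2, Nat.add_mul_div_left _ _ (pow_pos (by omega : 0 < b) i)]
    rw [show d * b ^ (a - i) = d * b ^ (a - i - 1) * b by
      rw [mul_assoc, ← pow_succ]; congr 2; omega]
    rw [Nat.add_mul_mod_self_right]
    exact hg i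
  · subst heq
    rw [show x + d * b ^ i = x + b ^ i * d by ring,
      Nat.add_mul_div_left _ _ (pow_pos (by omega : 0 < b) i),
      Nat.div_eq_of_lt hx, Nat.zero_add]
    have : d % b ≤ d := Nat.mod_le d b
    omega
  · have h3 : d * b ^ a ≤ 2 * b ^ a := Nat.mul_le_mul_right _ hd
    have h4 : 3 * b ^ a ≤ b * b ^ a := Nat.mul_le_mul_right _ (by omega)
    have h5 : b * b ^ a = b ^ (a + 1) := by rw [pow_succ, mul_comm]
    have h6 : b ^ (a + 1) ≤ b ^ i := Nat.pow_le_pow_right (by omega) (by omega)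
    have hbig : x + d * b ^ a < b ^ i := by omega
    rw [Nat.div_eq_of_lt hbig]
    simp

/-- Geometric sums: `Gs c a = 1 + c + ... + c^(a-1)`. -/
def Gs (c : ℕ) : ℕ → ℕ
  | 0 => 0
  | a + 1 => c * Gs c a + 1

lemma Gs4 (a : ℕ) : 3 * Gs 4 a + 1 = 4 ^ a := by
  induction a with
  | zero => simp [Gs]
  | succ a ih => rw [Gs, pow_succ]; omega

lemma Gs5 (b : ℕ) : 4 * Gs 5 b + 1 = 5 ^ b := by
  induction b with
  | zero => simp [Gs]
  | succ b ih => rw [Gs, pow_succ]; omega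

/-- Every `n ≤ 2·Gs 4 a + 2·Gs 5 b` is a sum of an `a`-digit base-4-good number
and a `b`-digit base-5-good number. -/
def Q (a b : ℕ) : Prop := ∀ n ≤ 2 * Gs 4 a + 2 * Gs 5 b,
  ∃ x y : ℕ, x + y = n ∧ x < 4 ^ a ∧ GoodD 4 x ∧ y < 5 ^ b ∧ GoodD 5 y

lemma Q00 : Q 0 0 := by
  intro n hn
  simp [Gs] at hn
  exact ⟨0, 0, by omega, by norm_num, goodD_zero 4, by norm_num, goodD_zero 5⟩

lemma stepA {a b : ℕ} (hA : Gs 4 a ≤ 2 * Gs 5 b) (hQ : Q a b) : Q (a + 1) b := by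
  intro n hn
  have hGa : Gs 4 (a + 1) = 4 * Gs 4 a + 1 := rfl
  set g := Gs 4 a with hg
  set h := Gs 5 b with hh
  have hP : (4 : ℕ) ^ a = 3 * g + 1 := (Gs4 a).symm
  have hkey : ∃ d m, d ≤ 2 ∧ n = m + d * (3 * g + 1) ∧ m ≤ 2 * g + 2 * h := by
    rcases Nat.lt_or_ge n (3 * g + 1) with h1 | h1
    · exact ⟨0, n, by omega, by omega, by omega⟩
    · rcases Nat.lt_or_ge n (2 * (3 * g + 1)) with h2 | h2
      · exact ⟨1, n - (3 * g + 1), by omega, by omega, by omega⟩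
      · exact ⟨2, n - 2 * (3 * g + 1), by omega, by omega, by omega⟩
  obtain ⟨d, m, hd, hnm, hm⟩ := hkey
  obtain ⟨x, y, hxy, hx4, hgx, hy5, hgy⟩ := hQ m hm
  refine ⟨x + d * 4 ^ a, y, ?_, ?_, goodD_add_high (by norm_num) hx4 hgx hd, hy5, hgy⟩
  · rw [hP]; omega
  · have h3 : d * 4 ^ a ≤ 2 * 4 ^ a := Nat.mul_le_mul_right _ hd
    have h5 : (4 : ℕ) ^ (a + 1) = 4 * 4 ^ a := by rw [pow_succ, mul_comm]
    omega

lemma stepB {a b : ℕ} (hB : Gs 5 b ≤ Gs 4 a) (hQ : Q a b) : Q a (b + 1) := by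
  intro n hn
  have hGb : Gs 5 (b + 1) = 5 * Gs 5 b + 1 := rfl
  set g := Gs 4 a with hg
  set h := Gs 5 b with hh
  have hP : (5 : ℕ) ^ b = 4 * h + 1 := (Gs5 b).symm
  have hkey : ∃ d m, d ≤ 2 ∧ n = m + d * (4 * h + 1) ∧ m ≤ 2 * g + 2 * h := by
    rcases Nat.lt_or_ge n (4 * h + 1) with h1 | h1
    · exact ⟨0, n, by omega, by omega, by omega⟩
    · rcases Nat.lt_or_ge n (2 * (4 * h + 1)) with h2 | h2
      · exact ⟨1, n - (4 * h + 1), by omega, by omega, by omega⟩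
      · exact ⟨2, n - 2 * (4 * h + 1), by omega, by omega, by omega⟩
  obtain ⟨d, m, hd, hnm, hm⟩ := hkey
  obtain ⟨x, y, hxy, hx4, hgx, hy5, hgy⟩ := hQ m hm
  refine ⟨x, y + d * 5 ^ b, ?_, hx4, hgx, ?_, goodD_add_high (by norm_num) hy5 hgy hd⟩
  · rw [hP]; omega
  · have h3 : d * 5 ^ b ≤ 2 * 5 ^ b := Nat.mul_le_mul_right _ hd
    have h5 : (5 : ℕ) ^ (b + 1) = 5 * 5 ^ b := by rw [pow_succ, mul_comm]
    omega

lemma Qcofinal : ∀ k : ℕ, ∃ a b, k ≤ 2 * Gs 4 a + 2 * Gs 5 b ∧ Q a b := by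
  intro k
  induction k with
  | zero => exact ⟨0, 0, Nat.zero_le _, Q00⟩
  | succ k ih =>
    obtain ⟨a, b, hk, hQ⟩ := ih
    by_cases hA : Gs 4 a ≤ 2 * Gs 5 b
    · refine ⟨a + 1, b, ?_, stepA hA hQ⟩
      have : Gs 4 (a + 1) = 4 * Gs 4 a + 1 := rfl
      omega
    · refine ⟨a, b + 1, ?_, stepB (by omega) hQ⟩
      have : Gs 5 (b + 1) = 5 * Gs 5 b + 1 := rfl
      omega

lemma goodD_pow {b : ℕ} (hb : 2 ≤ b) (t : ℕ) : GoodD b (b ^ t) := by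
  intro i
  rcases Nat.lt_trichotomy i t with hit | rfl | hit
  · rw [Nat.pow_div (le_of_lt hit) (by omega)]
    rw [show b ^ (t - i) = b ^ (t - i - 1) * b by rw [← pow_succ]; congr 1; omega]
    rw [Nat.mul_mod_left]
    omega
  · rw [Nat.div_self (pow_pos (by omega : 0 < b) i)]
    have : 1 % b = 1 := Nat.mod_eq_of_lt (by omega)
    omega
  · rw [Nat.div_eq_of_lt (Nat.pow_lt_pow_right (by omega) hit)]
    simp

/-- There are infinitely many triples (x, y, z) of natural numbers with x + y = z such that
every base-4 digit of x, every base-5 digit of y, and every base-6 digit of z lies in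
{0, …, 2}. -/
theorem infinitely_many_restricted_digit_sums :
    ∀ N : ℕ, ∃ x y z : ℕ, N < z ∧ x + y = z ∧
      (∀ d ∈ Nat.digits 4 x, d ≤ 2) ∧
      (∀ d ∈ Nat.digits 5 y, d ≤ 2) ∧
      (∀ d ∈ Nat.digits 6 z, d ≤ 2) := by
  intro N
  obtain ⟨a, b, hk, hQ⟩ := Qcofinal (6 ^ (N + 1))
  obtain ⟨x, y, hxy, _, hgx, _, hgy⟩ := hQ (6 ^ (N + 1)) hk
  have hN : N < 6 ^ (N + 1) :=
    (Nat.lt_pow_self (by norm_num : 1 < 6) : N < 6 ^ N).trans_le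
      (Nat.pow_le_pow_right (by norm_num) (Nat.le_succ N))
  refine ⟨x, y, 6 ^ (N + 1), hN, hxy,
    goodD_digits (by norm_num) x hgx,
    goodD_digits (by norm_num) y hgy,
    goodD_digits (by norm_num) _ (goodD_pow (by norm_num) (N + 1))⟩
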